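/- Let Γ be a finite simplicial graph and let Γᵉ be its extension graph. The clique number of Γᵉ equals the clique number of Γ. -/

import Mathlib

/-- Commutation relations of the right-angled Artin group on `Γ`. -/
def raagRels {V : Type*} (Γ : SimpleGraph V) : Set (FreeGroup V) :=
  {r | ∃ u v : V, Γ.Adj u v ∧
    r = FreeGroup.of u * FreeGroup.of v * (FreeGroup.of u)⁻¹ * (FreeGroup.of v)⁻¹}

/-- The right-angled Artin group (partially commutative group) on the graph `Γ`. -/
abbrev RAAG {V : Type*} (Γ : SimpleGraph V) : Type _ := PresentedGroup (raagRels Γ)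

/-- The standard generator of `RAAG Γ` corresponding to a vertex `v`. -/
def RAAG.gen {V : Type*} (Γ : SimpleGraph V) (v : V) : RAAG Γ := PresentedGroup.of v

/-- Vertices of the extension graph: conjugates of standard generators in `RAAG Γ`. -/
def ExtVertex {V : Type*} (Γ : SimpleGraph V) : Type _ :=
  {g : RAAG Γ // ∃ (x : V) (h : RAAG Γ), g = h⁻¹ * RAAG.gen Γ x * h}

/-- The extension graph `Γᵉ`: edges between distinct commuting conjugates of generators. -/
def extGraph {V : Type*} (Γ : SimpleGraph V) : SimpleGraph (ExtVertex Γ) where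
  Adj u v := u ≠ v ∧ Commute u.val v.val
  symm := ⟨fun u v h => ⟨h.1.symm, h.2.symm⟩⟩
  loopless := ⟨fun u h => h.1 rfl⟩

/-! The heart of the matter is that if a generator `x` commutes with a conjugate `c⁻¹ y c ≠ x`,
then `x` and `y` are adjacent. Since `RAAG Γ` is the HNN extension of `RAAG (Γ - x)` over the
subgroup generated by the link of `x`, with stable letter `x`, Britton's lemma puts the
centralizer of `x` inside the subgroup generated by the star of `x`. The retraction onto that
subgroup fixes `c⁻¹ y c`, kills `y` unless `y` lies in the star, and turns `c` into an element
commuting with `x`, which rules out `y = x`. So sending a conjugate of `x` to `x` is a graph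
homomorphism `Γᵉ → Γ`; the generators give one `Γ → Γᵉ`, and graphs with homomorphisms both
ways have the same clique number. -/

namespace SimpleGraph

variable {α β : Type*} {G : SimpleGraph α} {H : SimpleGraph β}

theorem Hom.not_cliqueFree (f : G →g H) {n : ℕ} (h : ¬G.CliqueFree n) : ¬H.CliqueFree n := by
  rw [not_cliqueFree_iff_top_isContained] at h ⊢
  obtain ⟨c⟩ := h
  exact ⟨⟨f.comp c.toHom, Hom.injective_of_top_hom _⟩⟩

theorem cliqueNum_eq_of_hom (f : G →g H) (g : H →g G) : G.cliqueNum = H.cliqueNum := by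
  have (n : ℕ) : ¬G.CliqueFree n ↔ ¬H.CliqueFree n := ⟨f.not_cliqueFree, g.not_cliqueFree⟩
  unfold cliqueNum
  congr 1
  ext n
  simpa [CliqueFree] using this n

end SimpleGraph

namespace HNNExtension

open NormalWord Subgroup

variable {G : Type*} [Group G]

section General

variable {A B : Subgroup G} {φ : A ≃* B}

theorem exists_reducedWord_prod_eq (g : HNNExtension G A B φ) :
    ∃ w : ReducedWord G A B, w.prod φ = g := by
  obtain ⟨d⟩ := TransversalPair.nonempty G A B
  exact ⟨(equiv φ d g).toReducedWord, (equiv φ d).symm_apply_apply g⟩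

namespace NormalWord.ReducedWord

theorem prod_cons (a b : G) (u : ℤˣ) (L : List (ℤˣ × G))
    (h : ((u, b) :: L).IsChain fun p q => p.2 ∈ toSubgroup A B p.1 → p.1 = q.1) :
    (⟨a, (u, b) :: L, h⟩ : ReducedWord G A B).prod φ =
      of a * t ^ (u : ℤ) * (⟨b, L, h.tail⟩ : ReducedWord G A B).prod φ := by
  simp only [prod, List.map_cons, List.prod_cons, mul_assoc]

theorem prod_append_singleton (a b : G) (u : ℤˣ) (L : List (ℤˣ × G))
    (h : (L ++ [(u, b)]).IsChain fun p q => p.2 ∈ toSubgroup A B p.1 → p.1 = q.1) :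
    (⟨a, L ++ [(u, b)], h⟩ : ReducedWord G A B).prod φ =
      (⟨a, L, (List.isChain_append.1 h).1⟩ : ReducedWord G A B).prod φ * t ^ (u : ℤ) * of b := by
  simp only [prod, List.map_append, List.prod_append, List.map_cons, List.map_nil,
    List.prod_cons, List.prod_nil, mul_one, mul_assoc]

end NormalWord.ReducedWord

end General

variable {A : Subgroup G}

theorem toSubgroup_self (u : ℤˣ) : toSubgroup A A u = A := by
  simp [toSubgroup]

theorem commute_t_of_mem {a : G} (ha : a ∈ A) :
    Commute (t : HNNExtension G A A (.refl _)) (of a) :=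
  t_mul_of (φ := .refl _) ⟨a, ha⟩

/-- Under `hlast`, prepending and appending the letter `t` to `w` both give reduced words; their
products agree since `t` commutes with `w.prod`, so Britton's lemma puts their heads `1` and
`w.head` in the same coset of `A`. -/
theorem NormalWord.ReducedWord.head_mem_of_commute_t {w : ReducedWord G A A}
    (hw : Commute t (w.prod (.refl _)))
    (hlast : ∀ p ∈ w.toList.getLast?, p.2 ∈ A → p.1 = 1) : w.head ∈ A := by
  by_contra hA
  let w₁ : ReducedWord G A A :=
    ⟨1, (1, w.head) :: w.toList, List.isChain_cons.2 ⟨fun _ _ h => absurd h hA, w.chain⟩⟩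
  let w₂ : ReducedWord G A A :=
    ⟨w.head, w.toList ++ [(1, 1)], List.isChain_append.2
      ⟨w.chain, List.isChain_singleton _, fun p hp _ hq => by
        obtain rfl := Option.mem_some_iff.1 hq
        simpa [toSubgroup_self] using hlast p hp⟩⟩
  have h₁ : w₁.prod (.refl _) = t * w.prod (.refl _) := by
    simp [w₁, prod, mul_assoc]
  have h₂ : w₂.prod (.refl _) = w.prod (.refl _) * t := by
    simp [w₂, prod, mul_assoc]
  have := (HNNExtension.ReducedWord.map_fst_eq_and_of_prod_eq _
    (h₁.trans (hw.eq.trans h₂.symm))).2 1 (by simp [w₁])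
  exact hA (by simpa [w₁, w₂] using this)

theorem mem_sup_zpowers_of_commute_t {g : HNNExtension G A A (.refl _)} (hg : Commute t g) :
    g ∈ A.map of ⊔ zpowers t := by
  have hof : ∀ a ∈ A, (of a : HNNExtension G A A (.refl _)) ∈ A.map of ⊔ zpowers t :=
    fun a ha => mem_sup_left (mem_map_of_mem _ ha)
  have ht : ∀ k : ℤ, (t : HNNExtension G A A (.refl _)) ^ k ∈ A.map of ⊔ zpowers t :=
    fun k => mem_sup_right (zpow_mem_zpowers _ _)
  have htk (k : ℤ) : Commute (t : HNNExtension G A A (.refl _)) (t ^ k) :=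
    (Commute.refl t).zpow_right k
  obtain ⟨w, rfl⟩ := exists_reducedWord_prod_eq g
  induction h : w.toList.length using Nat.strong_induction_on generalizing w with
  | _ n ih =>
  obtain ⟨a, L, hL⟩ := w
  by_cases ha : a ∈ A
  · rcases L with _ | ⟨⟨u, b⟩, L⟩
    · simpa [ReducedWord.prod] using hof a ha
    · rw [ReducedWord.prod_cons] at hg ⊢
      refine mul_mem (mul_mem (hof a ha) (ht u)) (ih L.length (by simp [← h]) _ ?_ rfl)
      simpa [mul_assoc] using ((commute_t_of_mem ha).mul_right (htk u)).inv_right.mul_right hg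
  · obtain ⟨L, ⟨u, b⟩, rfl, hb⟩ : ∃ L' p, L = L' ++ [p] ∧ p.2 ∈ A := by
      by_contra! hlast
      refine ha (ReducedWord.head_mem_of_commute_t hg fun p hp hpA => ?_)
      obtain ⟨L', hL'⟩ := List.getLast?_eq_some_iff.1 hp
      exact absurd hpA (hlast L' p hL')
    rw [ReducedWord.prod_append_singleton] at hg ⊢
    refine mul_mem (mul_mem (ih L.length (by simp [← h]) _ ?_ rfl) (ht u)) (hof b hb)
    simpa [mul_assoc] using hg.mul_right ((htk u).mul_right (commute_t_of_mem hb)).inv_right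

end HNNExtension

namespace RAAG

open Subgroup HNNExtension

variable {V : Type*} {Γ : SimpleGraph V}

theorem commute_gen_of_adj {u v : V} (h : Γ.Adj u v) : Commute (gen Γ u) (gen Γ v) :=
  commutatorElement_eq_one_iff_commute.1 <| by
    simpa [commutatorElement_def, gen, PresentedGroup.of] using
      PresentedGroup.one_of_mem (rels := raagRels Γ) ⟨u, v, h, rfl⟩

variable (Γ) in
def lift {H : Type*} [Group H] (f : V → H) (hf : ∀ u v, Γ.Adj u v → Commute (f u) (f v)) :
    RAAG Γ →* H :=
  PresentedGroup.toGroup <| by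
    rintro _ ⟨u, v, huv, rfl⟩
    simpa [commutatorElement_def] using commutatorElement_eq_one_iff_commute.2 (hf u v huv)

@[simp]
theorem lift_gen {H : Type*} [Group H] (f : V → H) (hf : ∀ u v, Γ.Adj u v → Commute (f u) (f v))
    (v : V) : lift Γ f hf (gen Γ v) = f v :=
  PresentedGroup.toGroup.of _

theorem hom_ext {H : Type*} [Group H] {φ ψ : RAAG Γ →* H}
    (h : ∀ v, φ (gen Γ v) = ψ (gen Γ v)) : φ = ψ :=
  PresentedGroup.ext h

variable (Γ) in
theorem closure_range_gen : closure (Set.range (gen Γ)) = ⊤ :=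
  PresentedGroup.closure_range_of _

variable (Γ) in
noncomputable def exponents : RAAG Γ →* Multiplicative (V →₀ ℤ) :=
  lift Γ (fun v => .ofAdd (Finsupp.single v 1)) fun _ _ _ => Commute.all _ _

variable (Γ) in
theorem gen_injective : Function.Injective (gen Γ) := fun u v h =>
  Finsupp.single_left_injective one_ne_zero (by simpa [exponents] using congrArg (exponents Γ) h)

theorem gen_ne_one (v : V) : gen Γ v ≠ 1 := fun h => by
  simpa [exponents] using congrArg (exponents Γ) h

open Classical in
variable (Γ) in
noncomputable def restrict (S : Set V) : RAAG Γ →* RAAG Γ :=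
  lift Γ (fun v => if v ∈ S then gen Γ v else 1) fun u v h => by
    split_ifs <;> simp [commute_gen_of_adj h]

theorem restrict_gen_of_mem {S : Set V} {v : V} (hv : v ∈ S) :
    restrict Γ S (gen Γ v) = gen Γ v := by
  simp [restrict, hv]

theorem restrict_gen_of_notMem {S : Set V} {v : V} (hv : v ∉ S) : restrict Γ S (gen Γ v) = 1 := by
  simp [restrict, hv]

theorem restrict_eq_self_of_mem_closure {S : Set V} {g : RAAG Γ}
    (hg : g ∈ closure (gen Γ '' S)) : restrict Γ S g = g := by
  have : closure (gen Γ '' S) ≤ (restrict Γ S).eqLocus (MonoidHom.id _) := by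
    rw [closure_le]
    rintro _ ⟨v, hv, rfl⟩
    exact restrict_gen_of_mem hv
  exact this hg

theorem restrict_mem_closure (S : Set V) (g : RAAG Γ) :
    restrict Γ S g ∈ closure (gen Γ '' S) := by
  have : (restrict Γ S).range ≤ closure (gen Γ '' S) := by
    rw [MonoidHom.range_eq_map, ← closure_range_gen, MonoidHom.map_closure, closure_le]
    rintro _ ⟨_, ⟨v, rfl⟩, rfl⟩
    by_cases hv : v ∈ S
    · rw [restrict_gen_of_mem hv]
      exact Subgroup.subset_closure ⟨v, hv, rfl⟩
    · rw [restrict_gen_of_notMem hv]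
      exact one_mem _
  exact this ⟨g, rfl⟩

variable (Γ) in
def starSubgroup (x : V) : Subgroup (RAAG Γ) :=
  closure (gen Γ '' insert x (Γ.neighborSet x))

theorem gen_mem_starSubgroup_self (x : V) : gen Γ x ∈ starSubgroup Γ x :=
  Subgroup.subset_closure ⟨x, Set.mem_insert _ _, rfl⟩

theorem commute_gen_of_mem_starSubgroup {x : V} {g : RAAG Γ} (hg : g ∈ starSubgroup Γ x) :
    Commute (gen Γ x) g := by
  have hx : gen Γ x ∈ centralizer (gen Γ '' insert x (Γ.neighborSet x)) := by
    rintro _ ⟨v, rfl | hv, rfl⟩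
    exacts [rfl, (commute_gen_of_adj hv).eq.symm]
  rw [← centralizer_closure] at hx
  exact (mem_centralizer_iff.1 hx g hg).symm

section HNNDecomposition

variable (Γ)

def ofInduce (s : Set V) : RAAG (Γ.induce s) →* RAAG Γ :=
  lift _ (fun v => gen Γ v) fun _ _ h => commute_gen_of_adj h

@[simp]
theorem ofInduce_gen (s : Set V) (v : s) : ofInduce Γ s (gen _ v) = gen Γ v :=
  lift_gen ..

def linkSubgroup (x : V) : Subgroup (RAAG (Γ.induce {x}ᶜ)) :=
  closure (gen _ '' {v | Γ.Adj x v})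

theorem ofInduce_mem_starSubgroup {x : V} {a : RAAG (Γ.induce {x}ᶜ)}
    (ha : a ∈ linkSubgroup Γ x) : ofInduce Γ {x}ᶜ a ∈ starSubgroup Γ x := by
  have : (linkSubgroup Γ x).map (ofInduce Γ {x}ᶜ) ≤ starSubgroup Γ x := by
    rw [linkSubgroup, MonoidHom.map_closure, closure_le]
    rintro _ ⟨_, ⟨v, hv, rfl⟩, rfl⟩
    rw [ofInduce_gen]
    exact Subgroup.subset_closure ⟨v, Or.inr hv, rfl⟩
  exact this (mem_map_of_mem _ ha)

abbrev LinkHNN (x : V) : Type _ :=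
  HNNExtension (RAAG (Γ.induce {x}ᶜ)) (linkSubgroup Γ x) (linkSubgroup Γ x) (.refl _)

open Classical in
noncomputable def toHNN (x : V) : RAAG Γ →* LinkHNN Γ x :=
  lift Γ (fun v => if h : v = x then t else of (gen _ ⟨v, h⟩)) fun u v huv => by
    by_cases hu : u = x <;> by_cases hv : v = x
    · exact absurd (hu ▸ hv ▸ huv) (Γ.loopless.irrefl _)
    · simp only [dif_pos hu, dif_neg hv]
      exact commute_t_of_mem (Subgroup.subset_closure (Set.mem_image_of_mem _ (hu ▸ huv)))
    · simp only [dif_neg hu, dif_pos hv]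
      exact (commute_t_of_mem
        (Subgroup.subset_closure (Set.mem_image_of_mem _ (hv ▸ huv.symm)))).symm
    · simp only [dif_neg hu, dif_neg hv]
      exact (commute_gen_of_adj (Γ := Γ.induce {x}ᶜ) (u := ⟨u, hu⟩) (v := ⟨v, hv⟩) huv).map of

noncomputable def fromHNN (x : V) : LinkHNN Γ x →* RAAG Γ :=
  HNNExtension.lift (ofInduce Γ {x}ᶜ) (gen Γ x) fun a =>
    (commute_gen_of_mem_starSubgroup (ofInduce_mem_starSubgroup Γ a.2)).eq

theorem toHNN_gen_self (x : V) : toHNN Γ x (gen Γ x) = t :=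
  (lift_gen ..).trans (dif_pos rfl)

theorem toHNN_gen_of_ne {x v : V} (hv : v ≠ x) : toHNN Γ x (gen Γ v) = of (gen _ ⟨v, hv⟩) :=
  (lift_gen ..).trans (dif_neg hv)

theorem fromHNN_t (x : V) : fromHNN Γ x t = gen Γ x :=
  HNNExtension.lift_t ..

theorem fromHNN_of (x : V) (a : RAAG (Γ.induce {x}ᶜ)) :
    fromHNN Γ x (of a) = ofInduce Γ {x}ᶜ a :=
  HNNExtension.lift_of ..

theorem fromHNN_toHNN (x : V) (g : RAAG Γ) : fromHNN Γ x (toHNN Γ x g) = g := by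
  refine DFunLike.congr_fun
    (hom_ext (φ := (fromHNN Γ x).comp (toHNN Γ x)) (ψ := .id _) fun v => ?_) g
  by_cases hv : v = x
  · subst hv
    simp only [MonoidHom.comp_apply, toHNN_gen_self, fromHNN_t, MonoidHom.id_apply]
  · simp only [MonoidHom.comp_apply, toHNN_gen_of_ne Γ hv, fromHNN_of, ofInduce_gen,
      MonoidHom.id_apply]

end HNNDecomposition

theorem mem_starSubgroup_of_commute {x : V} {g : RAAG Γ} (hg : Commute (gen Γ x) g) :
    g ∈ starSubgroup Γ x := by
  have h := mem_sup_zpowers_of_commute_t (toHNN_gen_self Γ x ▸ hg.map (toHNN Γ x))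
  rw [← fromHNN_toHNN Γ x g]
  refine (?_ : map (fromHNN Γ x) _ ≤ _) (mem_map_of_mem _ h)
  rw [Subgroup.map_sup, MonoidHom.map_zpowers, map_map, sup_le_iff, zpowers_le, fromHNN_t]
  refine ⟨?_, gen_mem_starSubgroup_self x⟩
  rintro _ ⟨a, ha, rfl⟩
  rw [MonoidHom.comp_apply, fromHNN_of]
  exact ofInduce_mem_starSubgroup Γ ha

theorem adj_of_commute_gen_conj {x y : V} {c : RAAG Γ} (hne : gen Γ x ≠ c⁻¹ * gen Γ y * c)
    (hc : Commute (gen Γ x) (c⁻¹ * gen Γ y * c)) : Γ.Adj x y := by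
  set S := insert x (Γ.neighborSet x)
  have hfix : (restrict Γ S c)⁻¹ * restrict Γ S (gen Γ y) * restrict Γ S c =
      c⁻¹ * gen Γ y * c := by
    simpa using restrict_eq_self_of_mem_closure (mem_starSubgroup_of_commute hc)
  have hy : y ∈ S := by
    by_contra hy
    rw [restrict_gen_of_notMem hy, mul_one, inv_mul_cancel] at hfix
    exact gen_ne_one y (by simpa [mul_assoc] using congrArg (fun g => c * g * c⁻¹) hfix.symm)
  obtain rfl | hadj := hy
  · have hcomm := commute_gen_of_mem_starSubgroup (restrict_mem_closure S c)
    rw [restrict_gen_of_mem (Set.mem_insert _ _), mul_assoc, hcomm.eq, inv_mul_cancel_left]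
      at hfix
    exact absurd hfix hne
  · exact hadj

theorem adj_of_commute_conj {x y : V} {k m : RAAG Γ}
    (hne : k⁻¹ * gen Γ x * k ≠ m⁻¹ * gen Γ y * m)
    (hc : Commute (k⁻¹ * gen Γ x * k) (m⁻¹ * gen Γ y * m)) : Γ.Adj x y := by
  have e₁ : k * (k⁻¹ * gen Γ x * k) * k⁻¹ = gen Γ x := by group
  have e₂ : k * (m⁻¹ * gen Γ y * m) * k⁻¹ = (m * k⁻¹)⁻¹ * gen Γ y * (m * k⁻¹) := by group
  refine adj_of_commute_gen_conj (c := m * k⁻¹) ?_ ?_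
  · rw [← e₁, ← e₂]
    exact fun he => hne (by simpa using he)
  · rw [← e₁, ← e₂]
    exact (Commute.conj_iff k).2 hc

end RAAG

namespace extGraph

open RAAG

variable {V : Type*} (Γ : SimpleGraph V)

def genHom : Γ →g extGraph Γ where
  toFun v := ⟨gen Γ v, v, 1, by group⟩
  map_rel' h := ⟨fun he => h.ne (gen_injective Γ (congrArg Subtype.val he)), commute_gen_of_adj h⟩

noncomputable def projHom : extGraph Γ →g Γ where
  toFun u := u.2.choose
  map_rel' {u w} h := by
    obtain ⟨k, hk⟩ := u.2.choose_spec
    obtain ⟨m, hm⟩ := w.2.choose_spec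
    have hne : u.val ≠ w.val := fun he => h.1 (Subtype.ext he)
    have hc := h.2
    rw [hk, hm] at hne hc
    exact adj_of_commute_conj hne hc

end extGraph

theorem extGraph_cliqueNum_general
    {V : Type*} (Γ : SimpleGraph V) :
    (extGraph Γ).cliqueNum = Γ.cliqueNum :=
  SimpleGraph.cliqueNum_eq_of_hom (extGraph.projHom Γ) (extGraph.genHom Γ)

/-- The clique number of the extension graph equals the clique number of the graph. -/
theorem extGraph_cliqueNum
    {V : Type*} [Fintype V] (Γ : SimpleGraph V) :
    (extGraph Γ).cliqueNum = Γ.cliqueNum :=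
  extGraph_cliqueNum_general Γ
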